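/- arXiv:1307.5863 — 2 statements merged into one kernel-verified Lean document; each statement's English description precedes it below -/
import Mathlib

section
/- The function h(x) = √3 (x² − 1) φ(x) Φ(x) + (√3/(2π)) x e^{−x²} + (√3/√π) e^{−3x²/4} Φ(x/√2) satisfies ∫_{−∞}^∞ h(x) dx = 1, where φ and Φ are the standard normal density and CDF. -/
/-!
The middle term of `h` is odd and integrates to `0`. The other two have the form `g(x) Φ(u x)`
with `g` even, integrable and `u` odd; since `Φ(-y) = 1 - Φ(y)`, averaging over `x ↦ -x` gives
`∫ g(x) Φ(u x) dx = ½ ∫ g`. For the first term `∫ (x² - 1) φ = 0` because `(x² - 1) φ(x)` is the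
derivative of `-x φ(x)`, and the last term is `2 · N(0, 2/3)-density(x) · Φ(x/√2)`, so it
contributes `½ · 2 = 1`.
-/

open MeasureTheory Real Set ProbabilityTheory
open scoped NNReal

theorem Function.Odd.integral_eq_zero {E : Type*} [NormedAddCommGroup E] [NormedSpace ℝ E]
    {f : ℝ → E} (hf : f.Odd) : ∫ x, f x = 0 := by
  have h := integral_neg_eq_self f volume
  simp_rw [hf.eq, integral_neg] at h
  have h₂ : (2 : ℝ) • ∫ x, f x = 0 := by rw [two_smul]; nth_rw 1 [← h]; exact neg_add_cancel _
  exact (smul_eq_zero.mp h₂).resolve_left two_ne_zero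

theorem Function.Even.integral_mul_eq_half {g C : ℝ → ℝ} (hg_even : g.Even) (hg : Integrable g)
    (hgC : Integrable fun x => g x * C x) (hC : ∀ x, C (-x) = 1 - C x) :
    ∫ x, g x * C x = (∫ x, g x) / 2 := by
  have h := integral_neg_eq_self (fun x => g x * C x) volume
  simp_rw [hg_even.eq, hC, mul_sub, mul_one] at h
  rw [integral_sub hg hgC] at h
  linarith

section IntegralIic

variable {φ Φ : ℝ → ℝ}

theorem monotone_of_eq_integral_Iic (hΦ : ∀ x, Φ x = ∫ t in Iic x, φ t) (hφ : Integrable φ)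
    (hφ_nonneg : 0 ≤ φ) : Monotone Φ := fun a b hab => by
  rw [hΦ, hΦ]
  exact setIntegral_mono_set hφ.integrableOn (.of_forall hφ_nonneg)
    (Iic_subset_Iic.mpr hab).eventuallyLE

theorem norm_le_one_of_eq_integral_Iic (hΦ : ∀ x, Φ x = ∫ t in Iic x, φ t) (hφ : Integrable φ)
    (hφ_nonneg : 0 ≤ φ) (hφ_one : ∫ t, φ t = 1) (x : ℝ) : ‖Φ x‖ ≤ 1 := by
  have hΦ_nonneg : 0 ≤ Φ x := by
    rw [hΦ]; exact setIntegral_nonneg measurableSet_Iic fun t _ => hφ_nonneg t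
  rw [norm_of_nonneg hΦ_nonneg, hΦ, ← hφ_one]
  exact setIntegral_le_integral hφ (.of_forall hφ_nonneg)

theorem neg_eq_one_sub_of_eq_integral_Iic (hΦ : ∀ x, Φ x = ∫ t in Iic x, φ t) (hφ : Integrable φ)
    (hφ_even : φ.Even) (hφ_one : ∫ t, φ t = 1) (x : ℝ) : Φ (-x) = 1 - Φ x := by
  have h_reflect : ∫ t in Iic (-x), φ t = ∫ t in Ioi x, φ t := by
    rw [← integral_comp_neg_Ioi]
    simp_rw [hφ_even.eq]
  have h_split := intervalIntegral.integral_Iic_add_Ioi (b := x) hφ.integrableOn hφ.integrableOn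
  rw [hΦ, hΦ, h_reflect, ← hφ_one, ← h_split]
  ring

theorem integral_mul_comp_eq_half_of_eq_integral_Iic (hΦ : ∀ x, Φ x = ∫ t in Iic x, φ t)
    (hφ : Integrable φ) (hφ_nonneg : 0 ≤ φ) (hφ_even : φ.Even) (hφ_one : ∫ t, φ t = 1)
    ⦃g u : ℝ → ℝ⦄ (hg : Integrable g) (hg_even : g.Even) (hu : Measurable u) (hu_odd : u.Odd) :
    Integrable (fun x => g x * Φ (u x)) ∧ ∫ x, g x * Φ (u x) = (∫ x, g x) / 2 := by
  have hgΦ : Integrable fun x => g x * Φ (u x) :=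
    hg.mul_bdd
      ((monotone_of_eq_integral_Iic hΦ hφ hφ_nonneg).measurable.comp hu).aestronglyMeasurable
      (.of_forall fun x => norm_le_one_of_eq_integral_Iic hΦ hφ hφ_nonneg hφ_one (u x))
  refine ⟨hgΦ, hg_even.integral_mul_eq_half hg hgΦ fun x => ?_⟩
  rw [hu_odd.eq, neg_eq_one_sub_of_eq_integral_Iic hΦ hφ hφ_even hφ_one]

end IntegralIic

theorem integrable_sq_mul_exp_neg_mul_sq {b : ℝ} (hb : 0 < b) :
    Integrable fun x : ℝ => x ^ 2 * exp (-b * x ^ 2) := by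
  simpa [rpow_two] using integrable_rpow_mul_exp_neg_mul_sq hb (s := 2) (by norm_num)

theorem integral_two_mul_mul_sq_sub_one_mul_exp_neg_mul_sq {b : ℝ} (hb : 0 < b) :
    ∫ x, (2 * b * x ^ 2 - 1) * exp (-b * x ^ 2) = 0 := by
  refine integral_eq_zero_of_hasDerivAt_of_integrable (f := fun x => -(x * exp (-b * x ^ 2)))
    (fun x => ?_) ?_ (integrable_mul_exp_neg_mul_sq hb).neg
  · convert ((hasDerivAt_id' x).fun_mul ((hasDerivAt_pow 2 x).const_mul (-b)).exp).fun_neg using 1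
    push_cast
    ring
  · convert ((integrable_sq_mul_exp_neg_mul_sq hb).const_mul (2 * b)).sub'
      (integrable_exp_neg_mul_sq hb) using 2
    ring

theorem gaussianPDFReal_zero_even (v : ℝ≥0) : (gaussianPDFReal 0 v).Even := fun x => by
  simp [gaussianPDFReal]

theorem gaussianPDFReal_zero_one_apply (x : ℝ) :
    gaussianPDFReal 0 1 x = (√(2 * π))⁻¹ * exp (-(1 / 2) * x ^ 2) := by
  simp only [gaussianPDFReal, NNReal.coe_one, mul_one, sub_zero]
  ring_nf

theorem integrable_sq_sub_one_mul_gaussianPDFReal :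
    Integrable fun x => (x ^ 2 - 1) * gaussianPDFReal 0 1 x := by
  convert ((integrable_sq_mul_exp_neg_mul_sq (b := 1 / 2) (by norm_num)).sub'
    (integrable_exp_neg_mul_sq (b := 1 / 2) (by norm_num))).const_mul (√(2 * π))⁻¹ using 2 with x
  rw [gaussianPDFReal_zero_one_apply]
  ring

theorem integral_sq_sub_one_mul_gaussianPDFReal :
    ∫ x, (x ^ 2 - 1) * gaussianPDFReal 0 1 x = 0 := by
  calc ∫ x, (x ^ 2 - 1) * gaussianPDFReal 0 1 x
      = (√(2 * π))⁻¹ * ∫ x, (2 * (1 / 2) * x ^ 2 - 1) * exp (-(1 / 2) * x ^ 2) := by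
        rw [← integral_const_mul]
        congr with x
        rw [gaussianPDFReal_zero_one_apply]
        ring
    _ = 0 := by
        rw [integral_two_mul_mul_sq_sub_one_mul_exp_neg_mul_sq (by norm_num), mul_zero]

theorem sqrt_three_div_sqrt_pi_mul_exp_eq_gaussianPDFReal (x : ℝ) :
    √3 / √π * exp (-3 * x ^ 2 / 4) = 2 * gaussianPDFReal 0 (2 / 3) x := by
  have h_sqrt : √(2 * π * (2 / 3)) = 2 * √π / √3 := by
    rw [show 2 * π * (2 / 3) = 2 ^ 2 * π / 3 by ring, sqrt_div' _ (by norm_num),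
      sqrt_mul' _ pi_pos.le, sqrt_sq zero_le_two]
  simp only [gaussianPDFReal, NNReal.coe_div, NNReal.coe_ofNat, sub_zero, h_sqrt]
  field_simp
  ring_nf

/-- The density `h` of the height of a local maximum of an isotropic Gaussian field
on ℝ² in the case `κ = 1` integrates to 1. -/
theorem height_density_R2_kappa_one_integral (φ Φ : ℝ → ℝ)
    (hφ : ∀ x, φ x = (Real.sqrt (2 * π))⁻¹ * Real.exp (-x ^ 2 / 2))
    (hΦ : ∀ x, Φ x = ∫ t in Set.Iic x, φ t) :
    ∫ x, (Real.sqrt 3 * (x ^ 2 - 1) * φ x * Φ x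
        + Real.sqrt 3 / (2 * π) * x * Real.exp (-x ^ 2)
        + Real.sqrt 3 / Real.sqrt π * Real.exp (-3 * x ^ 2 / 4)
            * Φ (x / Real.sqrt 2)) = 1 := by
  obtain rfl : φ = gaussianPDFReal 0 1 := funext fun x => by simp [hφ, gaussianPDFReal]
  simp_rw [sqrt_three_div_sqrt_pi_mul_exp_eq_gaussianPDFReal]
  have half := integral_mul_comp_eq_half_of_eq_integral_Iic hΦ (integrable_gaussianPDFReal 0 1)
    (gaussianPDFReal_nonneg 0 1) (gaussianPDFReal_zero_even 1)
    (integral_gaussianPDFReal_eq_one 0 one_ne_zero)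
  have hg₁ : Integrable fun x => √3 * (x ^ 2 - 1) * gaussianPDFReal 0 1 x := by
    simpa only [mul_assoc] using integrable_sq_sub_one_mul_gaussianPDFReal.const_mul √3
  obtain ⟨hf₁, h₁⟩ := half (u := fun x => x) hg₁
    (fun x => by rw [neg_sq, (gaussianPDFReal_zero_even 1).eq]) measurable_id' fun x => rfl
  obtain ⟨hf₃, h₃⟩ := half (u := fun x => x / √2)
    ((integrable_gaussianPDFReal 0 (2 / 3)).const_mul 2)
    (fun x => by rw [(gaussianPDFReal_zero_even _).eq]) (by fun_prop) fun x => neg_div _ _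
  have hf₂ : Integrable fun x : ℝ => √3 / (2 * π) * x * exp (-x ^ 2) := by
    simpa [mul_assoc] using (integrable_mul_exp_neg_mul_sq one_pos).const_mul (√3 / (2 * π))
  have h₂ : ∫ x : ℝ, √3 / (2 * π) * x * exp (-x ^ 2) = 0 :=
    Function.Odd.integral_eq_zero fun x => by rw [neg_sq]; ring
  rw [integral_add (hf₁.fun_add hf₂) hf₃, integral_add hf₁ hf₂, h₁, h₂, h₃]
  simp_rw [mul_assoc, integral_const_mul, integral_sq_sub_one_mul_gaussianPDFReal,
    integral_gaussianPDFReal_eq_one 0 (by norm_num : (2 / 3 : ℝ≥0) ≠ 0)]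
  norm_num
end

section
/- The function h(x) = (2x² − 1) φ(x) Φ(√2 x) + (x√2/(2π)) e^{−3x²/2} + (1/√π) e^{−x²} Φ(x) satisfies ∫_{−∞}^∞ h(x) dx = 1, where φ and Φ are the standard normal density and CDF. -/
/-! Substituting `x ↦ -x` in the integral and using `Φ(y) + Φ(-y) = 1`, the two `Φ`-terms of
`h(x) + h(-x)` collapse to `(2x² - 1) φ(x) + e^{-x²}/√π` and the odd middle term cancels. Both
summands integrate to 1 (the first because a standard Gaussian has second moment 1), so
`2 ∫ h = 2`. -/

open MeasureTheory Real ProbabilityTheory Set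
open scoped NNReal

theorem integral_eq_half_integral_add_comp_neg {F : ℝ → ℝ} (hF : Integrable F) :
    ∫ x, F x = (∫ x, (F x + F (-x))) / 2 := by
  rw [integral_add hF hF.comp_neg, integral_neg_eq_self]
  ring

section IicPrimitive

variable {φ : ℝ → ℝ}

theorem setIntegral_Iic_add_setIntegral_Iic_neg (hφ : Integrable φ) (heven : ∀ x, φ (-x) = φ x)
    (y : ℝ) : (∫ t in Iic y, φ t) + ∫ t in Iic (-y), φ t = ∫ t, φ t := by
  rw [← integral_comp_neg_Ioi,
    ← intervalIntegral.integral_Iic_add_Ioi (b := y) hφ.integrableOn hφ.integrableOn]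
  simp only [heven]

theorem monotone_setIntegral_Iic (hφ : Integrable φ) (hφ₀ : 0 ≤ φ) :
    Monotone fun x ↦ ∫ t in Iic x, φ t := fun _ _ hxy ↦
  setIntegral_mono_set hφ.integrableOn (.of_forall hφ₀) (.of_forall (Iic_subset_Iic.mpr hxy))

theorem norm_setIntegral_Iic_le_integral (hφ : Integrable φ) (hφ₀ : 0 ≤ φ) (x : ℝ) :
    ‖∫ t in Iic x, φ t‖ ≤ ∫ t, φ t := by
  rw [Real.norm_of_nonneg (setIntegral_nonneg measurableSet_Iic fun t _ ↦ hφ₀ t)]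
  exact setIntegral_le_integral hφ (.of_forall hφ₀)

end IicPrimitive

theorem gaussianPDFReal_zero_neg (v : ℝ≥0) (x : ℝ) :
    gaussianPDFReal 0 v (-x) = gaussianPDFReal 0 v x := by
  simp [gaussianPDFReal_def]

theorem integral_sq_mul_gaussianPDFReal (v : ℝ≥0) :
    ∫ x, x ^ 2 * gaussianPDFReal 0 v x = v := by
  rcases eq_or_ne v 0 with rfl | hv
  · simp [gaussianPDFReal_zero_var]
  have hmean : ∫ x, x ∂gaussianReal 0 v = 0 := integral_id_gaussianReal
  rw [← variance_fun_id_gaussianReal (μ := 0),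
    variance_of_integral_eq_zero measurable_id'.aemeasurable hmean,
    integral_gaussianReal_eq_integral_smul hv]
  simp only [smul_eq_mul, mul_comm]

theorem integral_two_mul_sq_sub_one_mul_gaussianPDFReal :
    ∫ x, (2 * x ^ 2 - 1) * gaussianPDFReal 0 1 x = 1 := by
  have hsq : Integrable fun x ↦ x ^ 2 * gaussianPDFReal 0 1 x :=
    .of_integral_ne_zero (by simp [integral_sq_mul_gaussianPDFReal])
  simp only [sub_mul, one_mul, mul_assoc]
  rw [integral_sub (hsq.const_mul 2) (integrable_gaussianPDFReal 0 1), integral_const_mul,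
    integral_sq_mul_gaussianPDFReal, integral_gaussianPDFReal_eq_one 0 one_ne_zero]
  norm_num

theorem integrable_two_mul_sq_sub_one_mul_gaussianPDFReal :
    Integrable fun x ↦ (2 * x ^ 2 - 1) * gaussianPDFReal 0 1 x :=
  .of_integral_ne_zero (by simp [integral_two_mul_sq_sub_one_mul_gaussianPDFReal])

theorem integral_inv_sqrt_pi_mul_exp_neg_sq :
    ∫ x, (√π)⁻¹ * exp (-x ^ 2) = 1 := by
  simpa [integral_const_mul, inv_mul_cancel₀ (sqrt_pos.mpr pi_pos).ne'] using
    congrArg ((√π)⁻¹ * ·) (integral_gaussian 1)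

theorem integrable_inv_sqrt_pi_mul_exp_neg_sq :
    Integrable fun x ↦ (√π)⁻¹ * exp (-x ^ 2) :=
  .of_integral_ne_zero (by simp [integral_inv_sqrt_pi_mul_exp_neg_sq])

noncomputable def heightDensity (Φ : ℝ → ℝ) (x : ℝ) : ℝ :=
  (2 * x ^ 2 - 1) * gaussianPDFReal 0 1 x * Φ (√2 * x)
    + x * √2 / (2 * π) * exp (-3 * x ^ 2 / 2) + (√π)⁻¹ * exp (-x ^ 2) * Φ x

theorem integrable_heightDensity {Φ : ℝ → ℝ} (hΦ : Measurable Φ) (hΦ₁ : ∀ x, ‖Φ x‖ ≤ 1) :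
    Integrable (heightDensity Φ) := by
  have hodd : Integrable fun x ↦ x * √2 / (2 * π) * exp (-3 * x ^ 2 / 2) :=
    ((integrable_mul_exp_neg_mul_sq (b := 3 / 2) (by norm_num)).mul_const
      (√2 / (2 * π))).congr (.of_forall fun x ↦ by ring_nf)
  exact ((integrable_two_mul_sq_sub_one_mul_gaussianPDFReal.mul_bdd
    (hΦ.comp (measurable_const_mul _)).aestronglyMeasurable (.of_forall fun _ ↦ hΦ₁ _)).add
    hodd).add
    (integrable_inv_sqrt_pi_mul_exp_neg_sq.mul_bdd hΦ.aestronglyMeasurable (.of_forall hΦ₁))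

theorem heightDensity_add_neg {Φ : ℝ → ℝ} (hΦ : ∀ y, Φ y + Φ (-y) = 1) (x : ℝ) :
    heightDensity Φ x + heightDensity Φ (-x) =
      (2 * x ^ 2 - 1) * gaussianPDFReal 0 1 x + (√π)⁻¹ * exp (-x ^ 2) := by
  have h₁ := hΦ x
  have h₂ := hΦ (√2 * x)
  simp only [heightDensity, gaussianPDFReal_zero_neg, neg_sq, mul_neg]
  linear_combination (√π)⁻¹ * exp (-x ^ 2) * h₁ + (2 * x ^ 2 - 1) * gaussianPDFReal 0 1 x * h₂

/-- The density `h` of the height of a local maximum of the isotropic Gaussian field on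
the 2-sphere with covariance `⟨t,s⟩²` integrates to 1. -/
theorem height_density_S2_integral (φ Φ : ℝ → ℝ)
    (hφ : ∀ x, φ x = (Real.sqrt (2 * π))⁻¹ * Real.exp (-x ^ 2 / 2))
    (hΦ : ∀ x, Φ x = ∫ t in Set.Iic x, φ t) :
    ∫ x, ((2 * x ^ 2 - 1) * φ x * Φ (Real.sqrt 2 * x)
        + x * Real.sqrt 2 / (2 * π) * Real.exp (-3 * x ^ 2 / 2)
        + (Real.sqrt π)⁻¹ * Real.exp (-x ^ 2) * Φ x) = 1 := by
  obtain rfl : φ = gaussianPDFReal 0 1 := funext fun x ↦ by simp [hφ, gaussianPDFReal_def]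
  have hΦ' : Φ = fun x ↦ ∫ t in Iic x, gaussianPDFReal 0 1 t := funext hΦ
  have hpdf := integrable_gaussianPDFReal 0 1
  have hpdf₀ : 0 ≤ gaussianPDFReal 0 1 := gaussianPDFReal_nonneg 0 1
  have hsymm : ∀ y, Φ y + Φ (-y) = 1 := by
    simpa [hΦ', integral_gaussianPDFReal_eq_one] using
      setIntegral_Iic_add_setIntegral_Iic_neg hpdf (gaussianPDFReal_zero_neg 1)
  have hbound : ∀ x, ‖Φ x‖ ≤ 1 := by
    simpa [hΦ', integral_gaussianPDFReal_eq_one] using norm_setIntegral_Iic_le_integral hpdf hpdf₀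
  have hmono : Monotone Φ := hΦ' ▸ monotone_setIntegral_Iic hpdf hpdf₀
  change ∫ x, heightDensity Φ x = 1
  rw [integral_eq_half_integral_add_comp_neg (integrable_heightDensity hmono.measurable hbound),
    integral_congr_ae (.of_forall (heightDensity_add_neg hsymm)), integral_add
      integrable_two_mul_sq_sub_one_mul_gaussianPDFReal integrable_inv_sqrt_pi_mul_exp_neg_sq,
    integral_two_mul_sq_sub_one_mul_gaussianPDFReal, integral_inv_sqrt_pi_mul_exp_neg_sq]
  norm_num
end
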